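/- arXiv:2502.14646 — 4 statements merged into one kernel-verified Lean document; each statement's English description precedes it below -/
import Mathlib

section
/- Let n ≥ 1, 1 ≤ p ≤ n-1, and d = gcd(p, 2n-1). Then the characteristic polynomial of M^p (where M is the matrix of quantum multiplication by τ₁ on H•(OG(1,2n+1))) equals λ·(λ^{(2n-1)/d} - 2^{2p/d})^d. -/
/-!
`M n` is diagonalizable. For each root `l` of `l ^ (2n-1) = 4` the vector with entries
`2, l^(2n-2), …, l^n, 2 l^(n-1), …, 2 l^0` is an eigenvector with eigenvalue `l` (the doubling from
index `n` on absorbs the entry `2` of `M`), and `e₀ - e_{2n-1}` spans the kernel. Hence `M ^ p` has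
eigenvalues `0` and `(r ζ^k)^p`, `k < 2n-1`, where `r ^ (2n-1) = 4` and `ζ` is a primitive
`(2n-1)`-th root of unity. Since `ζ ^ p` is a primitive `(2n-1)/d`-th root of unity, these values
run `d` times through the roots of `X ^ ((2n-1)/d) - r ^ (p(2n-1)/d)`, and
`r ^ (p(2n-1)/d) = 4 ^ (p/d) = 2 ^ (2p/d)`.
-/

open Matrix Polynomial

/-- The matrix of quantum multiplication by τ₁ on H•(OG(1,2n+1)):
M[i+1][i] = 1 for 0 ≤ i ≤ 2n-2 except M[n][n-1] = 2, M[0][2n-2] = 1,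
M[1][2n-1] = 1, all other entries zero. -/
def M (n : ℕ) : Matrix (Fin (2*n)) (Fin (2*n)) ℂ :=
  Matrix.of fun i j =>
    if (i : ℕ) = (j : ℕ) + 1 then (if (i : ℕ) = n then 2 else 1)
    else if (i : ℕ) = 0 ∧ (j : ℕ) = 2*n - 2 then 1
    else if (i : ℕ) = 1 ∧ (j : ℕ) = 2*n - 1 then 1
    else 0

theorem Matrix.charpoly_pow_eq_prod_of_eigenvectors {ι κ K : Type*} [Fintype ι] [DecidableEq ι]
    [Fintype κ] [DecidableEq κ] [Field K] (A : Matrix ι ι K) {w : κ → ι → K} {f : κ → K}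
    (hf : Function.Injective f) (hw : ∀ k, w k ≠ 0) (hAw : ∀ k, A *ᵥ w k = f k • w k)
    (hcard : Fintype.card κ = Fintype.card ι) (p : ℕ) :
    (A ^ p).charpoly = ∏ k, (X - C (f k ^ p)) := by
  have hli : LinearIndependent K w :=
    Module.End.eigenvectors_linearIndependent' (toLin' A) f hf w fun k =>
      ⟨Module.End.mem_eigenspace_iff.mpr (hAw k), hw k⟩
  let b := basisOfLinearIndependentOfCardEqFinrank' w hli (by simpa using hcard)
  have hb : ⇑b = w := Module.Basis.coe_mk _ _
  have hApw : ∀ k, A ^ p *ᵥ w k = f k ^ p • w k := by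
    intro k
    induction p with
    | zero => simp
    | succ p ih => rw [pow_succ, ← mulVec_mulVec, hAw, mulVec_smul, ih, smul_smul, pow_succ']
  have hdiag : LinearMap.toMatrix b b (toLin' (A ^ p)) = diagonal fun k => f k ^ p := by
    ext i j
    rw [LinearMap.toMatrix_apply, hb, toLin'_apply, hApw, ← hb, map_smul, b.repr_self,
      Finsupp.smul_single, smul_eq_mul, mul_one, Finsupp.single_apply, diagonal_apply]
    rcases eq_or_ne i j with rfl | h
    · simp
    · simp [h, h.symm]
  rw [← charpoly_toLin', ← LinearMap.charpoly_toMatrix _ b, hdiag, charpoly_diagonal]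

theorem Function.Periodic.prod_range_mul {G : Type*} [CommMonoid G] {f : ℕ → G} {m : ℕ}
    (hf : Function.Periodic f m) (d : ℕ) :
    ∏ k ∈ Finset.range (d * m), f k = (∏ k ∈ Finset.range m, f k) ^ d := by
  induction d with
  | zero => simp
  | succ d ih =>
    rw [Nat.succ_mul, Finset.prod_range_add, ih, pow_succ]
    congr 1
    refine Finset.prod_congr rfl fun k _ => ?_
    rw [add_comm]
    exact hf.nat_mul d k

theorem IsPrimitiveRoot.pow_div_gcd {G : Type*} [CommMonoid G] {ζ : G} {N : ℕ}
    (hζ : IsPrimitiveRoot ζ N) (hN : N ≠ 0) (p : ℕ) :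
    IsPrimitiveRoot (ζ ^ p) (N / Nat.gcd p N) := by
  have h := IsPrimitiveRoot.orderOf (ζ ^ p)
  rwa [(hζ.isOfFinOrder hN).orderOf_pow, ← hζ.eq_orderOf, Nat.gcd_comm] at h

theorem prod_X_sub_C_pow_mul_primitiveRoot {R : Type*} [CommRing R] [IsDomain R] {ζ : R} {N : ℕ}
    (hζ : IsPrimitiveRoot ζ N) (hN : 0 < N) (r : R) (p : ℕ) :
    ∏ k ∈ Finset.range N, (X - C ((r * ζ ^ k) ^ p)) =
      (X ^ (N / Nat.gcd p N) - C (r ^ (p * (N / Nat.gcd p N)))) ^ Nat.gcd p N := by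
  set d := Nat.gcd p N
  set m := N / d
  have hdm : N = d * m := (Nat.mul_div_cancel' (Nat.gcd_dvd_right p N)).symm
  have hm : 0 < m := Nat.div_pos (Nat.gcd_le_right _ hN) (Nat.gcd_pos_of_pos_right _ hN)
  have hζp : IsPrimitiveRoot (ζ ^ p) m := hζ.pow_div_gcd hN.ne' p
  have hperiodic : Function.Periodic (fun k => X - C ((ζ ^ p) ^ k * r ^ p)) m := fun k => by
    simp only [pow_add, hζp.pow_eq_one, mul_one]
  calc ∏ k ∈ Finset.range N, (X - C ((r * ζ ^ k) ^ p))
      = ∏ k ∈ Finset.range (d * m), (X - C ((ζ ^ p) ^ k * r ^ p)) := by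
        rw [← hdm]
        refine Finset.prod_congr rfl fun k _ => ?_
        rw [mul_pow, ← pow_mul, ← pow_mul, mul_comm k, mul_comm]
    _ = (X ^ m - C ((r ^ p) ^ m)) ^ d := by
        rw [hperiodic.prod_range_mul, X_pow_sub_C_eq_prod hζp hm rfl]
    _ = (X ^ m - C (r ^ (p * m))) ^ d := by rw [pow_mul]

section M

variable {n : ℕ}

theorem M_apply_eq_zero {i j : Fin (2*n)} (h₁ : (i : ℕ) ≠ j + 1)
    (h₂ : ¬((i : ℕ) = 0 ∧ (j : ℕ) = 2*n - 2)) (h₃ : ¬((i : ℕ) = 1 ∧ (j : ℕ) = 2*n - 1)) :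
    M n i j = 0 := by
  simp [M, h₁, h₂, h₃]

theorem M_apply_of_eq_succ {i j : Fin (2*n)} (h : (i : ℕ) = j + 1) :
    M n i j = if (i : ℕ) = n then 2 else 1 := by
  simp [M, h]

theorem M_mulVec_apply_zero (hn : 2 ≤ n) (v : Fin (2*n) → ℂ) :
    (M n *ᵥ v) ⟨0, by omega⟩ = v ⟨2*n-2, by omega⟩ := by
  rw [mulVec, dotProduct, Finset.sum_eq_single ⟨2*n-2, by omega⟩]
  · simp [M]
  · intro j _ hj
    rw [M_apply_eq_zero (by simp) (by simpa [Fin.ext_iff] using hj) (by simp), zero_mul]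
  · simp

theorem M_mulVec_apply_one (hn : 2 ≤ n) (v : Fin (2*n) → ℂ) :
    (M n *ᵥ v) ⟨1, by omega⟩ = v ⟨0, by omega⟩ + v ⟨2*n-1, by omega⟩ := by
  rw [mulVec, dotProduct, Fintype.sum_eq_add ⟨0, by omega⟩ ⟨2*n-1, by omega⟩
    (by simp [Fin.ext_iff]; omega)]
  · rw [M_apply_of_eq_succ rfl, if_neg (by simp; omega)]
    simp [M, show 2 * n - 1 ≠ 0 by omega]
  · rintro j ⟨hj₀, hj₁⟩
    simp only [ne_eq, Fin.ext_iff] at hj₀ hj₁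
    rw [M_apply_eq_zero (by simp; omega) (by simp) (by simpa using hj₁), zero_mul]

theorem M_mulVec_apply_of_two_le (v : Fin (2*n) → ℂ) (i : Fin (2*n)) (hi : 2 ≤ (i : ℕ)) :
    (M n *ᵥ v) i = (if (i : ℕ) = n then 2 else 1) * v ⟨i - 1, by omega⟩ := by
  rw [mulVec, dotProduct, Finset.sum_eq_single ⟨i - 1, by omega⟩]
  · rw [M_apply_of_eq_succ (by simp; omega)]
  · intro j _ hj
    simp only [ne_eq, Fin.ext_iff] at hj
    rw [M_apply_eq_zero (by omega) (by omega) (by omega), zero_mul]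
  · simp

def M_eigenvector (n : ℕ) (l : ℂ) : Fin (2*n) → ℂ :=
  fun i => if (i : ℕ) = 0 then 2 else (if n ≤ (i : ℕ) then 2 else 1) * l ^ (2*n - 1 - i)

def M_nullVector (n : ℕ) : Fin (2*n) → ℂ :=
  fun i => if (i : ℕ) = 0 then 1 else if (i : ℕ) = 2*n - 1 then -1 else 0

theorem M_mulVec_eigenvector (hn : 2 ≤ n) {l : ℂ} (hl : l ^ (2*n - 1) = 4) :
    M n *ᵥ M_eigenvector n l = l • M_eigenvector n l := by
  ext ⟨i, hi⟩
  rw [Pi.smul_apply, smul_eq_mul]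
  rcases i with _ | _ | i
  · rw [M_mulVec_apply_zero hn]
    simp [M_eigenvector, show 2*n - 2 ≠ 0 by omega, show n ≤ 2*n - 2 by omega,
      show 2*n - 1 - (2*n - 2) = 1 by omega]
    ring
  · rw [M_mulVec_apply_one hn]
    have hl' : l * l ^ (2*n - 1 - 1) = 4 := by
      rw [← pow_succ', show 2*n - 1 - 1 + 1 = 2*n - 1 by omega, hl]
    simp [M_eigenvector, show 2*n - 1 ≠ 0 by omega, show ¬ n ≤ 1 by omega,
      show n ≤ 2*n - 1 by omega, hl']
    norm_num
  · rw [M_mulVec_apply_of_two_le _ _ (by simp)]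
    simp only [M_eigenvector, Nat.add_one_sub_one, Nat.add_eq_zero_iff, one_ne_zero, and_false,
      if_false, show 2*n - 1 - (i + 1) = 2*n - 1 - (i + 2) + 1 by omega, pow_succ]
    split_ifs <;> first | omega | ring

theorem M_mulVec_nullVector (hn : 2 ≤ n) : M n *ᵥ M_nullVector n = 0 := by
  ext ⟨i, hi⟩
  rcases i with _ | _ | i
  · rw [M_mulVec_apply_zero hn]
    simp [M_nullVector, show 2*n - 2 ≠ 0 by omega, show 2*n - 2 ≠ 2*n - 1 by omega]
  · rw [M_mulVec_apply_one hn]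
    simp [M_nullVector, show 2*n - 1 ≠ 0 by omega]
  · rw [M_mulVec_apply_of_two_le _ _ (by simp)]
    simp [M_nullVector, show i + 1 ≠ 2*n - 1 by omega]

theorem M_eigenvector_ne_zero (hn : 1 ≤ n) (l : ℂ) : M_eigenvector n l ≠ 0 := fun h => by
  simpa [M_eigenvector] using congrFun h ⟨0, by omega⟩

theorem M_nullVector_ne_zero (hn : 1 ≤ n) : M_nullVector n ≠ 0 := fun h => by
  simpa [M_nullVector] using congrFun h ⟨0, by omega⟩

theorem charpoly_M_pow (hn : 2 ≤ n) {ζ r : ℂ} (hζ : IsPrimitiveRoot ζ (2*n - 1))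
    (hr : r ^ (2*n - 1) = 4) (p : ℕ) :
    (M n ^ p).charpoly =
      (X - C (0 ^ p)) * ∏ k ∈ Finset.range (2*n - 1), (X - C ((r * ζ ^ k) ^ p)) := by
  have hr₀ : r ≠ 0 := by rintro rfl; simp [zero_pow (show 2*n - 1 ≠ 0 by omega)] at hr
  let f : Option (Fin (2*n - 1)) → ℂ := fun o => o.elim 0 fun k => r * ζ ^ (k : ℕ)
  let w : Option (Fin (2*n - 1)) → Fin (2*n) → ℂ :=
    fun o => o.elim (M_nullVector n) fun k => M_eigenvector n (r * ζ ^ (k : ℕ))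
  have hf : Function.Injective f := by
    rintro (_ | a) (_ | b) hab
    · rfl
    · exact absurd hab.symm (mul_ne_zero hr₀ (pow_ne_zero _ (hζ.ne_zero (by omega))))
    · exact absurd hab (mul_ne_zero hr₀ (pow_ne_zero _ (hζ.ne_zero (by omega))))
    · exact congrArg some (Fin.ext (hζ.pow_inj a.isLt b.isLt (mul_left_cancel₀ hr₀ hab)))
  have hw : ∀ o, w o ≠ 0 := by
    rintro (_ | k)
    · exact M_nullVector_ne_zero (by omega)
    · exact M_eigenvector_ne_zero (by omega) _
  have hMw : ∀ o, M n *ᵥ w o = f o • w o := by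
    rintro (_ | k)
    · simpa [w, f] using M_mulVec_nullVector hn
    · refine M_mulVec_eigenvector hn ?_
      rw [mul_pow, ← pow_mul, mul_comm (k : ℕ), pow_mul, hζ.pow_eq_one, one_pow, mul_one, hr]
  rw [(M n).charpoly_pow_eq_prod_of_eigenvectors hf hw hMw (by simp; omega), Fintype.prod_option]
  exact congrArg _ (Fin.prod_univ_eq_prod_range (fun k => X - C ((r * ζ ^ k) ^ p)) _)

end M

theorem charpoly_Mp_low_general (n p : ℕ) (hp1 : 1 ≤ p) (hp2 : p ≤ n - 1) :
    ((M n) ^ p).charpoly =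
      X * (X ^ ((2*n - 1) / Nat.gcd p (2*n - 1)) -
        C ((2:ℂ) ^ (2*p / Nat.gcd p (2*n - 1)))) ^ (Nat.gcd p (2*n - 1)) := by
  have hn : 2 ≤ n := by omega
  have hN : 0 < 2*n - 1 := by omega
  obtain ⟨ζ, hζ⟩ : ∃ ζ : ℂ, IsPrimitiveRoot ζ (2*n - 1) :=
    ⟨_, Complex.isPrimitiveRoot_exp _ hN.ne'⟩
  obtain ⟨r, hr⟩ := IsAlgClosed.exists_pow_nat_eq (4 : ℂ) hN
  have hd : Nat.gcd p (2*n - 1) ∣ p := Nat.gcd_dvd_left _ _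
  have hrpow : r ^ (p * ((2*n - 1) / Nat.gcd p (2*n - 1))) = 2 ^ (2*p / Nat.gcd p (2*n - 1)) := by
    rw [← Nat.mul_div_assoc p (Nat.gcd_dvd_right _ _), ← Nat.div_mul_right_comm hd, pow_mul', hr,
      Nat.mul_div_assoc 2 hd, pow_mul]
    norm_num
  rw [charpoly_M_pow hn hζ hr, prod_X_sub_C_pow_mul_primitiveRoot hζ hN, hrpow,
    zero_pow (by omega), map_zero, sub_zero]

theorem charpoly_Mp_low (n p : ℕ) (hn : 1 ≤ n) (hp1 : 1 ≤ p) (hp2 : p ≤ n - 1) :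
    ((M n) ^ p).charpoly =
      X * (X ^ ((2*n - 1) / Nat.gcd p (2*n - 1)) -
        C ((2:ℂ) ^ (2*p / Nat.gcd p (2*n - 1)))) ^ (Nat.gcd p (2*n - 1)) :=
  charpoly_Mp_low_general n p hp1 hp2
end

section
/- Let n ≥ 1, n ≤ p ≤ 2n-2, and d = gcd(p, 2n-1). Then the characteristic polynomial of (1/2)·M^p (where M is the matrix of quantum multiplication by τ₁ on H•(OG(1,2n+1))) equals λ·(λ^{(2n-1)/d} - 2^{(2p-(2n-1))/d})^d. -/
/-
`M n` has `2n` distinct eigenvalues: `0` and the numbers `ω ^ t * ρ`, `t < 2n - 1`, where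
`ρ ^ (2n-1) = 4` and `ω` is a primitive `(2n-1)`-th root of unity; the eigenvectors are
explicit. So `2⁻¹ • M n ^ p` is diagonalizable with eigenvalues `0` and
`(ω ^ p) ^ t * (ρ ^ p / 2)`. As `ω ^ p` is a primitive `(2n-1)/d`-th root of unity, the latter
run `d` times through the roots of `X ^ ((2n-1)/d) - (ρ ^ p / 2) ^ ((2n-1)/d)`, and
`(ρ ^ p / 2) ^ ((2n-1)/d) = 2 ^ ((2p-(2n-1))/d)` because `ρ ^ (2n-1) = 4`.
-/

open Matrix Polynomial

open Finset Function

namespace Module.End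

variable {κ : Type*} [Fintype κ] [DecidableEq κ]

theorem charpoly_eq_prod_of_apply_basis_eq_smul {R V : Type*} [CommRing R] [AddCommGroup V]
    [Module R V] [Module.Free R V] [Module.Finite R V] (f : End R V) (b : Module.Basis κ R V)
    {μ : κ → R} (h : ∀ k, f (b k) = μ k • b k) : f.charpoly = ∏ k, (X - C (μ k)) := by
  rw [← f.charpoly_toMatrix b, ← charpoly_diagonal]
  congr
  ext i j
  simp only [LinearMap.toMatrix_apply, h, map_smul, Module.Basis.repr_self, Finsupp.smul_apply,
    Finsupp.single_apply, smul_eq_mul, mul_ite, mul_one, mul_zero, diagonal_apply]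
  grind

theorem charpoly_aeval_eq_prod_of_hasEigenvector {K V : Type*} [Field K] [AddCommGroup V]
    [Module K V] [FiniteDimensional K V] (f : End K V) {μ : κ → K} (hμ : Function.Injective μ)
    {v : κ → V} (hv : ∀ k, f.HasEigenvector (μ k) (v k))
    (hcard : Fintype.card κ = Module.finrank K V) (q : K[X]) :
    (aeval f q).charpoly = ∏ k, (X - C (q.eval (μ k))) := by
  let b := basisOfLinearIndependentOfCardEqFinrank' v
    (f.eigenvectors_linearIndependent' μ hμ v hv) hcard
  refine charpoly_eq_prod_of_apply_basis_eq_smul _ b fun k => ?_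
  simpa [b] using aeval_apply_of_hasEigenvector (hv k)

end Module.End

theorem Matrix.charpoly_aeval_eq_prod_of_eigenvectors {ι κ K : Type*} [Fintype ι]
    [DecidableEq ι] [Fintype κ] [DecidableEq κ] [Field K] (A : Matrix ι ι K) {μ : κ → K}
    (hμ : Injective μ) {v : κ → ι → K} (hv : ∀ k, v k ≠ 0)
    (hAv : ∀ k, A *ᵥ v k = μ k • v k) (hcard : Fintype.card κ = Fintype.card ι)
    (q : K[X]) :
    (aeval A q).charpoly = ∏ k, (X - C (q.eval (μ k))) := by
  have hev : ∀ k, Module.End.HasEigenvector (toLin' A) (μ k) (v k) := fun k =>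
    ⟨Module.End.mem_eigenspace_iff.2 (by simpa using hAv k), hv k⟩
  rw [← charpoly_toLin']
  change (toLinAlgEquiv' (aeval A q)).charpoly = _
  rw [← aeval_algHom_apply]
  exact Module.End.charpoly_aeval_eq_prod_of_hasEigenvector _ hμ hev (by simpa using hcard) q

theorem Finset.prod_range_mul_of_periodic {M : Type*} [CommMonoid M] {f : ℕ → M} {m : ℕ}
    (hf : Periodic f m) (d : ℕ) :
    ∏ t ∈ range (d * m), f t = (∏ t ∈ range m, f t) ^ d := by
  induction d with
  | zero => simp
  | succ d ih =>
    rw [Nat.succ_mul, prod_range_add, ih, pow_succ]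
    congr 1
    exact prod_congr rfl fun t _ => by rw [add_comm]; exact hf.nat_mul d t

theorem IsPrimitiveRoot.pow_div_gcd_s6 {M : Type*} [CommMonoid M] {ω : M} {m : ℕ}
    (hω : IsPrimitiveRoot ω m) (hm : 0 < m) (p : ℕ) :
    IsPrimitiveRoot (ω ^ p) (m / Nat.gcd p m) := by
  have hd : 0 < Nat.gcd p m := Nat.gcd_pos_of_pos_right p hm
  have hcop := Nat.coprime_div_gcd_div_gcd hd
  have hsplit : ω ^ p = (ω ^ Nat.gcd p m) ^ (p / Nat.gcd p m) := by
    rw [← pow_mul, Nat.mul_div_cancel' (Nat.gcd_dvd_left p m)]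
  rw [hsplit]
  exact (hω.pow hm (Nat.mul_div_cancel' (Nat.gcd_dvd_right p m)).symm).pow_of_coprime _ hcop

theorem IsPrimitiveRoot.prod_X_sub_C_pow_mul {R : Type*} [CommRing R] [IsDomain R] {ω : R}
    {m : ℕ} (hω : IsPrimitiveRoot ω m) (hm : 0 < m) (p : ℕ) (c : R) :
    ∏ t ∈ range m, (X - C ((ω ^ t) ^ p * c)) =
      (X ^ (m / Nat.gcd p m) - C (c ^ (m / Nat.gcd p m))) ^ Nat.gcd p m := by
  have hω' := hω.pow_div_gcd_s6 hm p
  have hm' : 0 < m / Nat.gcd p m :=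
    Nat.div_pos (Nat.gcd_le_right p hm) (Nat.gcd_pos_of_pos_right p hm)
  have hper : Periodic (fun t => X - C ((ω ^ p) ^ t * c)) (m / Nat.gcd p m) := fun t => by
    simp only [pow_add, hω'.pow_eq_one, mul_one]
  simp_rw [← pow_mul, mul_comm _ p, pow_mul]
  conv_lhs => rw [← Nat.mul_div_cancel' (Nat.gcd_dvd_right p m)]
  rw [prod_range_mul_of_periodic hper, X_pow_sub_C_eq_prod hω' hm' rfl]

theorem inv_two_mul_pow_pow_div_of_pow_eq_four {K : Type*} [Field K] [NeZero (2 : K)] {ρ : K}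
    {m : ℕ} (hρ : ρ ^ m = 4) {p d : ℕ} (hdp : d ∣ p) (hdm : d ∣ m) (hmp : m ≤ 2 * p) :
    (2⁻¹ * ρ ^ p) ^ (m / d) = 2 ^ ((2 * p - m) / d) := by
  obtain ⟨p', rfl⟩ := hdp
  obtain ⟨m', rfl⟩ := hdm
  rcases Nat.eq_zero_or_pos d with rfl | hd
  · simp
  have hmp' : m' ≤ 2 * p' := by nlinarith
  rw [show 2 * (d * p') - d * m' = d * (2 * p' - m') by rw [Nat.mul_sub, mul_left_comm],
    Nat.mul_div_cancel_left _ hd, Nat.mul_div_cancel_left _ hd, pow_sub₀ _ two_ne_zero hmp',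
    mul_pow, ← pow_mul, mul_right_comm, pow_mul, hρ, pow_mul, inv_pow]
  norm_num [mul_comm]

namespace M

variable {n : ℕ}

theorem mulVec_apply (hn : 2 ≤ n) (v : Fin (2*n) → ℂ) (i : Fin (2*n)) :
    (M n *ᵥ v) i =
      if (i : ℕ) = 0 then v ⟨2*n-2, by omega⟩
      else if (i : ℕ) = 1 then v ⟨0, by omega⟩ + v ⟨2*n-1, by omega⟩
      else (if (i : ℕ) = n then 2 else 1) * v ⟨i-1, by omega⟩ := by
  simp only [mulVec, dotProduct, M, of_apply]
  by_cases h0 : (i : ℕ) = 0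
  · rw [if_pos h0, Fintype.sum_eq_single ⟨2*n-2, by omega⟩]
    · simp [h0]
    · intro j hj
      simp only [ne_eq, Fin.ext_iff] at hj
      split_ifs <;> first | omega | simp
  by_cases h1 : (i : ℕ) = 1
  · rw [if_neg h0, if_pos h1,
      Fintype.sum_eq_add ⟨0, by omega⟩ ⟨2*n-1, by omega⟩ (by simp [Fin.ext_iff]; omega)]
    · simp [h1, show 1 ≠ n by omega, show 2 * n - 1 ≠ 0 by omega]
    · intro j hj
      simp only [ne_eq, Fin.ext_iff] at hj
      split_ifs <;> first | omega | simp
  · rw [if_neg h0, if_neg h1, Fintype.sum_eq_single ⟨i-1, by omega⟩]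
    · simp only [ite_mul, one_mul, zero_mul, ite_eq_left_iff]
      omega
    · intro j hj
      simp only [ne_eq, Fin.ext_iff] at hj
      split_ifs <;> first | omega | simp

/-- The entry at `0` is chosen so that the same formula also gives an eigenvector for `μ = 0`. -/
def eigenvector (n : ℕ) (μ : ℂ) : Fin (2*n) → ℂ := fun i =>
  if (i : ℕ) = 0 then μ ^ (2*n-1) - 2 else (if n ≤ (i : ℕ) then 2 else 1) * μ ^ (2*n-1-i)

theorem eigenvector_ne_zero (hn : 1 ≤ n) (μ : ℂ) : eigenvector n μ ≠ 0 := fun h => by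
  have := congrFun h ⟨2*n-1, by omega⟩
  simp [eigenvector, show 2*n-1 ≠ 0 by omega, show n ≤ 2*n-1 by omega] at this

theorem mulVec_eigenvector (hn : 2 ≤ n) {μ : ℂ} (hμ : μ * (μ ^ (2*n-1) - 4) = 0) :
    M n *ᵥ eigenvector n μ = μ • eigenvector n μ := by
  ext i
  rw [mulVec_apply hn, Pi.smul_apply, smul_eq_mul]
  by_cases h0 : (i : ℕ) = 0
  · simp only [h0, if_true, eigenvector, show 2*n-2 ≠ 0 by omega, show n ≤ 2*n-2 by omega,
      show 2*n-1-(2*n-2) = 1 by omega, if_false]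
    linear_combination -hμ
  by_cases h1 : (i : ℕ) = 1
  · have hm : 2*n-1 = (2*n-1-1) + 1 := by omega
    simp only [h1, if_true, eigenvector, show 2*n-1 ≠ 0 by omega, show n ≤ 2*n-1 by omega,
      show ¬ n ≤ 1 by omega, one_ne_zero, if_false, Nat.sub_self, pow_zero]
    rw [one_mul, ← pow_succ', ← hm]
    ring
  · have hexp : 2*n-1-(i-1) = (2*n-1-i) + 1 := by omega
    simp only [h0, h1, if_false, eigenvector, show (i : ℕ) - 1 ≠ 0 by omega, hexp, pow_succ]
    rcases lt_trichotomy (i : ℕ) n with hlt | heq | hgt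
    · simp [hlt.ne, hlt.not_ge, show ¬ n ≤ (i : ℕ) - 1 by omega]; ring
    · simp [heq, show ¬ n ≤ n - 1 by omega]; ring
    · simp [hgt.ne', hgt.le, show n ≤ (i : ℕ) - 1 by omega]; ring

theorem charpoly_aeval (hn : 2 ≤ n) {ρ ω : ℂ} (hρ : ρ ^ (2*n-1) = 4)
    (hω : IsPrimitiveRoot ω (2*n-1)) (q : ℂ[X]) :
    (aeval (M n) q).charpoly =
      (X - C (q.eval 0)) * ∏ t ∈ range (2*n-1), (X - C (q.eval (ω ^ t * ρ))) := by
  have hρ0 : ρ ≠ 0 := by rintro rfl; simp [show 2*n-1 ≠ 0 by omega] at hρ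
  let μ : Option (Fin (2*n-1)) → ℂ := fun k => k.elim 0 fun t => ω ^ (t : ℕ) * ρ
  have hμ : Injective μ := by
    rintro (_ | s) (_ | t) h
    · rfl
    · simp [μ, hρ0, hω.ne_zero (by omega)] at h
    · simp [μ, hρ0, hω.ne_zero (by omega)] at h
    · simp only [μ, Option.elim_some, mul_left_inj' hρ0] at h
      exact congrArg some (Fin.ext (hω.pow_inj s.2 t.2 h))
  have hroot : ∀ k, μ k * (μ k ^ (2*n-1) - 4) = 0 := by
    rintro (_ | t)
    · simp [μ]
    · show ω ^ (t : ℕ) * ρ * ((ω ^ (t : ℕ) * ρ) ^ (2*n-1) - 4) = 0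
      rw [mul_pow, hρ, ← pow_mul, mul_comm (t : ℕ), pow_mul, hω.pow_eq_one, one_pow]
      ring
  rw [Matrix.charpoly_aeval_eq_prod_of_eigenvectors (M n) hμ
    (fun _ => eigenvector_ne_zero (by omega) _) (fun k => mulVec_eigenvector hn (hroot k))
    (by simp only [Fintype.card_option, Fintype.card_fin]; omega), Fintype.prod_option,
    ← Fin.prod_univ_eq_prod_range (fun t => X - C (q.eval (ω ^ t * ρ)))]
  rfl

end M

theorem charpoly_Mp_high (n p : ℕ) (hn : 1 ≤ n) (hp1 : n ≤ p) (hp2 : p ≤ 2*n - 2) :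
    ((2⁻¹ : ℂ) • (M n) ^ p).charpoly =
      X * (X ^ ((2*n - 1) / Nat.gcd p (2*n - 1)) -
        C ((2:ℂ) ^ ((2*p - (2*n - 1)) / Nat.gcd p (2*n - 1)))) ^ (Nat.gcd p (2*n - 1)) := by
  have hn2 : 2 ≤ n := by omega
  obtain ⟨ρ, hρ⟩ : ∃ ρ : ℂ, ρ ^ (2*n-1) = 4 :=
    IsAlgClosed.exists_pow_nat_eq 4 (by omega)
  obtain ⟨ω, hω⟩ : ∃ ω : ℂ, IsPrimitiveRoot ω (2*n-1) :=
    ⟨_, Complex.isPrimitiveRoot_exp _ (by omega)⟩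
  have hsmul : (2⁻¹ : ℂ) • M n ^ p = aeval (M n) (C (2⁻¹ : ℂ) * X ^ p) := by
    simp [Algebra.smul_def]
  have heval : ∀ t : ℕ,
      (C (2⁻¹ : ℂ) * X ^ p).eval (ω ^ t * ρ) = (ω ^ t) ^ p * (2⁻¹ * ρ ^ p) :=
    fun t => by simp only [eval_mul, eval_C, eval_pow, eval_X]; ring
  rw [hsmul, M.charpoly_aeval hn2 hρ hω, prod_congr rfl fun t _ => by rw [heval t],
    hω.prod_X_sub_C_pow_mul (by omega), inv_two_mul_pow_pow_div_of_pow_eq_four hρ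
    (Nat.gcd_dvd_left _ _) (Nat.gcd_dvd_right _ _) (by omega)]
  simp [show p ≠ 0 by omega]
end

section
/- Let n ≥ 1 and 1 ≤ p ≤ 2n-2. The eigenvalues of the matrix A(τ_p) of quantum multiplication by τ_p on H•(OG(1,2n+1)) are all simple if and only if p and 2n-1 are relatively prime. -/
open Matrix Polynomial

/-!
`A(τ_p)` is a polynomial in `M n`, namely `aeval (M n) (C c * X ^ p)` with `c = 1` or
`c = 1/2`. Over an algebraically closed field `det (g A) = ∏ g λ` over the eigenvalues `λ` of `A`,
so the eigenvalues of `g A`, with multiplicity, are the `g λ`. The first basis vector `e₀` is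
cyclic for `M n` and `M^{2n} e₀ = 4 M e₀`, so the characteristic polynomial of `M n` is
`X^{2n} - 4X`: its roots are `0` and the `2n - 1` distinct solutions of `λ^{2n-1} = 4`. The map
`λ ↦ λ^p` separates them iff `gcd(p, 2n-1) = 1`: for `d = gcd(p, 2n-1) > 1` and a primitive
`d`-th root of unity `ζ`, `λ ≠ ζλ` have equal `p`-th powers; conversely `x^p = y^p` and
`x^{2n-1} = y^{2n-1}` force `x = y`.
-/

namespace Matrix

variable {K : Type*} [Field K] {ι : Type*} [Fintype ι] [DecidableEq ι]

theorem det_aeval_eq_prod_roots_charpoly [IsAlgClosed K] (A : Matrix ι ι K) (q : K[X]) :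
    (aeval A q).det = (A.charpoly.roots.map q.eval).prod := by
  have hA : A.charpoly.Splits := IsAlgClosed.splits _
  have hcard : Multiset.card A.charpoly.roots = Fintype.card ι := by
    rw [splits_iff_card_roots.mp hA, charpoly_natDegree_eq_dim]
  have hlinear (μ : K) : (aeval A (X - C μ)).det = (A.charpoly.roots.map (· - μ)).prod := by
    have : aeval A (X - C μ) = -(scalar ι μ - A) := by simp [algebraMap_eq_diagonal]
    rw [this, det_neg, ← eval_charpoly, hA.eval_eq_prod_roots_of_monic A.charpoly_monic, ← hcard,
      ← Multiset.card_map (μ - ·), ← Multiset.prod_map_neg, Multiset.map_map]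
    simp
  let detAeval : K[X] →* K := detMonoidHom.comp (aeval A : K[X] →ₐ[K] Matrix ι ι K).toMonoidHom
  have hdetAeval (f : K[X]) : detAeval f = (aeval A f).det := rfl
  set c := q.leadingCoeff
  calc (aeval A q).det
      = detAeval (C c * (q.roots.map (X - C ·)).prod) := by
        rw [hdetAeval, ← (IsAlgClosed.splits q).eq_prod_roots]
    _ = c ^ Fintype.card ι * (q.roots.map fun μ => (A.charpoly.roots.map (· - μ)).prod).prod := by
        rw [map_mul, map_multiset_prod, Multiset.map_map]
        simp only [Function.comp_def, hdetAeval, hlinear, aeval_C, Algebra.algebraMap_eq_smul_one,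
          det_smul, det_one, mul_one]
    _ = (A.charpoly.roots.map fun t => c * (q.roots.map (t - ·)).prod).prod := by
        rw [Multiset.prod_map_prod_map, Multiset.prod_map_mul, ← hcard]
        simp
    _ = (A.charpoly.roots.map q.eval).prod := by
        simp [(IsAlgClosed.splits q).eval_eq_prod_roots, c]

theorem charpoly_aeval [IsAlgClosed K] (A : Matrix ι ι K) (g : K[X]) :
    (aeval A g).charpoly = ((A.charpoly.roots.map g.eval).map (X - C ·)).prod := by
  refine Polynomial.funext fun x => ?_
  have : scalar ι x - aeval A g = aeval A (C x - g) := by simp [algebraMap_eq_diagonal]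
  rw [eval_charpoly, this, det_aeval_eq_prod_roots_charpoly, eval_multiset_prod]
  simp [Multiset.map_map]

theorem roots_charpoly_aeval [IsAlgClosed K] (A : Matrix ι ι K) (g : K[X]) :
    (aeval A g).charpoly.roots = A.charpoly.roots.map g.eval := by
  rw [charpoly_aeval, roots_multiset_prod_X_sub_C]

theorem charpoly_eq_of_linearIndependent_pow_mulVec {m : ℕ} {A : Matrix (Fin m) (Fin m) K}
    {v : Fin m → K} (hv : LinearIndependent K fun k : Fin m => (A ^ (k : ℕ)) *ᵥ v) {q : K[X]}
    (hq : q.Monic) (hdeg : q.natDegree = m) (hqv : aeval A q *ᵥ v = 0) : A.charpoly = q := by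
  set r := A.charpoly - q
  have hrv : aeval A r *ᵥ v = 0 := by simp [r, aeval_self_charpoly, neg_mulVec, hqv]
  by_contra hne
  have hr : r ≠ 0 := sub_ne_zero.mpr hne
  have hrdeg : r.natDegree < m := by
    have hdim : A.charpoly.degree = m := by rw [charpoly_degree_eq_dim, Fintype.card_fin]
    rw [natDegree_lt_iff_degree_lt hr, ← hdim]
    refine degree_sub_lt_left ?_ A.charpoly_monic.ne_zero ?_
    · rw [hdim, degree_eq_natDegree hq.ne_zero, hdeg]
    · rw [A.charpoly_monic.leadingCoeff, hq.leadingCoeff]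
  have hcoeff (k : Fin m) : r.coeff k = 0 := by
    refine Fintype.linearIndependent_iff.mp hv (fun k => r.coeff k) ?_ k
    rw [aeval_eq_sum_range' hrdeg, sum_mulVec, ← Fin.sum_univ_eq_sum_range] at hrv
    simpa [smul_mulVec] using hrv
  refine hr (Polynomial.ext fun k => ?_)
  rw [coeff_zero]
  by_cases hk : k < m
  · exact hcoeff ⟨k, hk⟩
  · exact coeff_eq_zero_of_natDegree_lt (by omega)

theorem linearIndependent_of_forall_lt_apply_eq_zero {m : ℕ} (v : Fin m → Fin m → K)
    (hv : ∀ k i, k < i → v k i = 0) (hdiag : ∀ k, v k k ≠ 0) : LinearIndependent K v := by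
  have : (of v).det ≠ 0 := by
    rw [det_of_isLowerTriangular (of v) fun k i hki => hv k i hki]
    exact Finset.prod_ne_zero_iff.mpr fun k _ => hdiag k
  exact linearIndependent_rows_of_det_ne_zero this

end Matrix

theorem injOn_pow_insert_zero_iff {M₀ : Type*} [MonoidWithZero M₀] [NoZeroDivisors M₀]
    {p : ℕ} (hp : p ≠ 0) {s : Set M₀} (hs : 0 ∉ s) :
    Set.InjOn (· ^ p) (insert 0 s) ↔ Set.InjOn (· ^ p) s := by
  rw [Set.injOn_insert hs, and_iff_left_iff_imp]
  rintro - ⟨x, hx, hx0⟩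
  exact hs ((pow_eq_zero_iff hp).mp (by simpa [zero_pow hp] using hx0) ▸ hx)

theorem Complex.injOn_pow_setOf_pow_eq_iff_coprime {m p : ℕ} (hm : 0 < m) {a : ℂ}
    (ha : a ≠ 0) :
    Set.InjOn (· ^ p) {x : ℂ | x ^ m = a} ↔ p.Coprime m := by
  constructor
  · intro hinj
    by_contra hcop
    have hd : 1 < p.gcd m := lt_of_le_of_ne (Nat.gcd_pos_of_pos_right p hm) (Ne.symm hcop)
    obtain ⟨ζ, hζ⟩ : ∃ ζ : ℂ, IsPrimitiveRoot ζ (p.gcd m) :=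
      ⟨_, Complex.isPrimitiveRoot_exp _ (by omega)⟩
    obtain ⟨x, hx⟩ := IsAlgClosed.exists_pow_nat_eq a hm
    have hζp : ζ ^ p = 1 := (hζ.pow_eq_one_iff_dvd p).mpr (Nat.gcd_dvd_left p m)
    have hζm : ζ ^ m = 1 := (hζ.pow_eq_one_iff_dvd m).mpr (Nat.gcd_dvd_right p m)
    have hx0 : x ≠ 0 := by rintro rfl; exact ha (by rw [← hx, zero_pow hm.ne'])
    have : ζ * x = x := hinj (by simp [mul_pow, hζm, hx]) hx (by simp [mul_pow, hζp])
    exact hζ.ne_one hd ((mul_eq_right₀ hx0).mp this)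
  · intro hcop x (hx : x ^ m = a) y (hy : y ^ m = a) (hxy : x ^ p = y ^ p)
    have hy0 : y ≠ 0 := by rintro rfl; exact ha (by rw [← hy, zero_pow hm.ne'])
    refine (div_eq_one_iff_eq hy0).mp ((pow_eq_one_iff_of_coprime hcop).mp ⟨?_, ?_⟩)
    · rw [div_pow, hxy, div_self (pow_ne_zero _ hy0)]
    · rw [div_pow, hx, hy, div_self ha]

theorem Polynomial.forall_rootMultiplicity_le_one_iff_nodup_roots {R : Type*} [CommRing R]
    [IsDomain R] (f : R[X]) :
    (∀ z, f.rootMultiplicity z ≤ 1) ↔ f.roots.Nodup := by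
  classical
  simp [Multiset.nodup_iff_count_le_one, count_roots]

-- Indexed by `ℕ` to avoid `Fin` arithmetic; the zero vector when `2n ≤ k`.
def stdVec (n k : ℕ) : Fin (2 * n) → ℂ := fun i => if (i : ℕ) = k then 1 else 0

theorem M_mulVec_stdVec {n k : ℕ} (hk : k < 2 * n) :
    M n *ᵥ stdVec n k = fun i => M n i ⟨k, hk⟩ := by
  have : stdVec n k = Pi.single ⟨k, hk⟩ 1 := by
    funext i
    simp [stdVec, Pi.single_apply, Fin.ext_iff]
  rw [this, mulVec_single_one]
  rfl

theorem M_pow_mulVec_stdVec_zero {n k : ℕ} (hn : 2 ≤ n) (hk : k ≤ 2 * n - 2) :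
    M n ^ k *ᵥ stdVec n 0 = (if k < n then 1 else 2 : ℂ) • stdVec n k := by
  induction k with
  | zero => simp [show 0 < n by omega]
  | succ k ih =>
    rw [pow_succ', ← mulVec_mulVec, ih (by omega), mulVec_smul, M_mulVec_stdVec (by omega)]
    funext i
    simp only [M, stdVec, of_apply, Pi.smul_apply, smul_eq_mul]
    split_ifs <;> first | omega | norm_num

theorem M_pow_two_mul_sub_one_mulVec_stdVec_zero {n : ℕ} (hn : 2 ≤ n) :
    M n ^ (2 * n - 1) *ᵥ stdVec n 0 = (2 : ℂ) • (stdVec n (2 * n - 1) + stdVec n 0) := by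
  rw [show 2 * n - 1 = (2 * n - 2) + 1 by omega, pow_succ', ← mulVec_mulVec,
    M_pow_mulVec_stdVec_zero hn le_rfl, mulVec_smul, M_mulVec_stdVec (by omega)]
  funext i
  simp only [M, stdVec, of_apply, Pi.smul_apply, Pi.add_apply, smul_eq_mul, and_true]
  split_ifs <;> first | omega | norm_num

theorem M_pow_two_mul_mulVec_stdVec_zero {n : ℕ} (hn : 2 ≤ n) :
    M n ^ (2 * n) *ᵥ stdVec n 0 = (4 : ℂ) • (M n *ᵥ stdVec n 0) := by
  have : M n ^ (2 * n) = M n * M n ^ (2 * n - 1) := by rw [← pow_succ']; congr 1; omega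
  rw [this, ← mulVec_mulVec, M_pow_two_mul_sub_one_mulVec_stdVec_zero hn, mulVec_smul,
    mulVec_add, M_mulVec_stdVec (by omega), M_mulVec_stdVec (by omega)]
  funext i
  simp only [M, of_apply, Pi.smul_apply, Pi.add_apply, smul_eq_mul, and_true]
  split_ifs <;> first | omega | norm_num

theorem linearIndependent_M_pow_mulVec_stdVec_zero {n : ℕ} (hn : 2 ≤ n) :
    LinearIndependent ℂ fun k : Fin (2 * n) => M n ^ (k : ℕ) *ᵥ stdVec n 0 := by
  have horbit (k i : Fin (2 * n)) : (M n ^ (k : ℕ) *ᵥ stdVec n 0) i =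
      if i = k then (if (k : ℕ) < n then 1 else 2)
      else if (i : ℕ) = 0 ∧ (k : ℕ) = 2 * n - 1 then 2 else 0 := by
    by_cases hk : (k : ℕ) = 2 * n - 1
    · rw [hk, M_pow_two_mul_sub_one_mulVec_stdVec_zero hn]
      simp only [stdVec, Pi.smul_apply, Pi.add_apply, smul_eq_mul, Fin.ext_iff, hk, and_true]
      split_ifs <;> first | omega | norm_num
    · rw [M_pow_mulVec_stdVec_zero hn (by omega)]
      simp only [stdVec, Pi.smul_apply, smul_eq_mul, Fin.ext_iff]
      split_ifs <;> first | omega | norm_num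
  refine linearIndependent_of_forall_lt_apply_eq_zero _ (fun k i hki => ?_) (fun k => ?_)
  · rw [horbit, if_neg (by omega), if_neg (by omega)]
  · rw [horbit, if_pos rfl]
    split_ifs <;> norm_num

theorem charpoly_M {n : ℕ} (hn : 2 ≤ n) : (M n).charpoly = X ^ (2 * n) - C 4 * X := by
  have hlow : (C (4 : ℂ) * X).degree < ((2 * n : ℕ) : WithBot ℕ) := by
    rw [degree_C_mul_X (by norm_num)]
    exact_mod_cast (by omega : 1 < 2 * n)
  refine charpoly_eq_of_linearIndependent_pow_mulVec (linearIndependent_M_pow_mulVec_stdVec_zero hn)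
    (monic_X_pow_sub hlow) ?_ ?_
  · rw [natDegree_sub_eq_left_of_natDegree_lt] <;> simp
    omega
  · simp [sub_mulVec, smul_mulVec, Algebra.algebraMap_eq_smul_one,
      M_pow_two_mul_mulVec_stdVec_zero hn]

theorem roots_charpoly_M {n : ℕ} (hn : 2 ≤ n) :
    (M n).charpoly.roots = 0 ::ₘ nthRoots (2 * n - 1) (4 : ℂ) := by
  have : (X ^ (2 * n) - C 4 * X : ℂ[X]) = X * (X ^ (2 * n - 1) - C 4) := by
    rw [mul_sub, ← pow_succ', Nat.sub_add_cancel (by omega), mul_comm X (C 4)]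
  rw [charpoly_M hn, this, roots_mul (mul_ne_zero X_ne_zero (X_pow_sub_C_ne_zero (by omega) _)),
    roots_X, nthRoots, Multiset.singleton_add]

theorem nodup_roots_charpoly_M {n : ℕ} (hn : 2 ≤ n) : (M n).charpoly.roots.Nodup := by
  rw [roots_charpoly_M hn, Multiset.nodup_cons, mem_nthRoots (by omega), zero_pow (by omega)]
  exact ⟨by norm_num, (Complex.isPrimitiveRoot_exp _ (by omega)).nthRoots_nodup (by norm_num)⟩

theorem setOf_mem_roots_charpoly_M {n : ℕ} (hn : 2 ≤ n) :
    {z | z ∈ (M n).charpoly.roots} = insert 0 {z : ℂ | z ^ (2 * n - 1) = 4} := by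
  ext z
  simp [roots_charpoly_M hn, mem_nthRoots (by omega : 0 < 2 * n - 1)]

theorem simple_eigenvalues_iff_coprime_general (n p : ℕ) (hp1 : 1 ≤ p)
    (hp2 : p ≤ 2*n - 2) :
    (∀ z : ℂ,
        (if p ≤ n - 1 then (M n) ^ p else (2⁻¹ : ℂ) • (M n) ^ p).charpoly.rootMultiplicity z
          ≤ 1) ↔
      Nat.Coprime p (2*n - 1) := by
  have hn : 2 ≤ n := by omega
  obtain ⟨c, hc, hA⟩ : ∃ c : ℂ, c ≠ 0 ∧
      (if p ≤ n - 1 then M n ^ p else (2⁻¹ : ℂ) • M n ^ p) = aeval (M n) (C c * X ^ p) := by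
    split_ifs
    · exact ⟨1, one_ne_zero, by simp⟩
    · exact ⟨2⁻¹, by norm_num, by simp [Algebra.smul_def]⟩
  rw [hA, forall_rootMultiplicity_le_one_iff_nodup_roots, Matrix.roots_charpoly_aeval,
    Multiset.nodup_map_iff_inj_on (nodup_roots_charpoly_M hn)]
  calc Set.InjOn (fun z => eval z (C c * X ^ p)) {z | z ∈ (M n).charpoly.roots}
      ↔ Set.InjOn ((c * ·) ∘ (· ^ p)) (insert 0 {z : ℂ | z ^ (2 * n - 1) = 4}) := by
        rw [setOf_mem_roots_charpoly_M hn]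
        simp [Function.comp_def]
    _ ↔ Set.InjOn (· ^ p) (insert 0 {z : ℂ | z ^ (2 * n - 1) = 4}) :=
        ⟨Set.InjOn.of_comp, (mul_right_injective₀ hc).comp_injOn⟩
    _ ↔ Set.InjOn (· ^ p) {z : ℂ | z ^ (2 * n - 1) = 4} :=
        injOn_pow_insert_zero_iff (by omega) (by simp [zero_pow (by omega : 2 * n - 1 ≠ 0)])
    _ ↔ p.Coprime (2 * n - 1) :=
        Complex.injOn_pow_setOf_pow_eq_iff_coprime (by omega) (by norm_num)

theorem simple_eigenvalues_iff_coprime (n p : ℕ) (hn : 1 ≤ n) (hp1 : 1 ≤ p)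
    (hp2 : p ≤ 2*n - 2) :
    (∀ z : ℂ,
        (if p ≤ n - 1 then (M n) ^ p else (2⁻¹ : ℂ) • (M n) ^ p).charpoly.rootMultiplicity z
          ≤ 1) ↔
      Nat.Coprime p (2*n - 1) :=
  simple_eigenvalues_iff_coprime_general n p hp1 hp2
end

section
/- Let n ≥ 1 and n ≤ p ≤ 2n-2. Then the maximum of the absolute values of the eigenvalues of (1/2)M^p is 2^{2p/(2n-1) - 1}, where M is the matrix of quantum multiplication by τ₁ on H•(OG(1,2n+1)). -/
open Matrix Polynomial

lemma mulVec_M (n : ℕ) (hn : 2 ≤ n) (v : Fin (2*n) → ℂ) (i : Fin (2*n)) :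
    (M n).mulVec v i =
      if (i : ℕ) = 0 then v ⟨2*n-2, by omega⟩
      else if (i : ℕ) = 1 then v ⟨0, by omega⟩ + v ⟨2*n-1, by omega⟩
      else (if (i : ℕ) = n then 2 else 1) * v ⟨(i : ℕ)-1, by omega⟩ := by
  classical
  have hi := i.2
  simp only [Matrix.mulVec, dotProduct, M, Matrix.of_apply]
  by_cases hi0 : (i : ℕ) = 0
  · rw [Finset.sum_congr rfl (fun j _ => show _ = if j = (⟨2*n-2, by omega⟩ : Fin (2*n)) then v j else 0 from ?_),
      Finset.sum_ite_eq' Finset.univ, if_pos (Finset.mem_univ _), if_pos hi0]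
    rcases eq_or_ne j (⟨2*n-2, by omega⟩ : Fin (2*n)) with rfl | hj
    · simp only [Fin.val_mk, if_true, and_true, eq_self_iff_true]
      rw [if_neg (by omega), if_pos hi0, one_mul]
    · have hj' : (j : ℕ) ≠ 2*n-2 := fun hc => hj (Fin.ext hc)
      rw [if_neg hj, if_neg (by omega), if_neg (by omega), if_neg (by omega), zero_mul]
  · by_cases hi1 : (i : ℕ) = 1
    · rw [Finset.sum_congr rfl (fun j _ => show _ =
        (if j = (⟨0, by omega⟩ : Fin (2*n)) then v j else 0)
        + (if j = (⟨2*n-1, by omega⟩ : Fin (2*n)) then v j else 0) from ?_),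
        Finset.sum_add_distrib, Finset.sum_ite_eq' Finset.univ, Finset.sum_ite_eq' Finset.univ,
        if_pos (Finset.mem_univ _), if_pos (Finset.mem_univ _), if_neg hi0, if_pos hi1]
      rcases eq_or_ne j (⟨0, by omega⟩ : Fin (2*n)) with rfl | hj0
      · rw [if_neg (show ¬ ((⟨0, by omega⟩ : Fin (2*n)) = ⟨2*n-1, by omega⟩) from
          fun hc => by simp [Fin.ext_iff] at hc; omega)]
        simp only [Fin.val_mk, if_true, eq_self_iff_true, add_zero]
        rw [if_pos (by omega), if_neg (by omega), one_mul]
      · rcases eq_or_ne j (⟨2*n-1, by omega⟩ : Fin (2*n)) with rfl | hj1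
        · rw [if_neg hj0]
          simp only [Fin.val_mk, if_true, and_true, eq_self_iff_true, zero_add]
          rw [if_neg (by omega), if_neg (by omega), if_pos hi1, one_mul]
        · have h0 : (j : ℕ) ≠ 0 := fun hc => hj0 (Fin.ext hc)
          have h1 : (j : ℕ) ≠ 2*n-1 := fun hc => hj1 (Fin.ext hc)
          rw [if_neg hj0, if_neg hj1, if_neg (by omega), if_neg (by omega), if_neg (by omega),
            zero_mul, add_zero]
    · rw [Finset.sum_congr rfl (fun j _ => show _ =
        if j = (⟨(i:ℕ)-1, by omega⟩ : Fin (2*n)) then (if (i:ℕ) = n then 2 else 1) * v j else 0 from ?_),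
        Finset.sum_ite_eq' Finset.univ, if_pos (Finset.mem_univ _), if_neg hi0, if_neg hi1]
      rcases eq_or_ne j (⟨(i:ℕ)-1, by omega⟩ : Fin (2*n)) with rfl | hj
      · simp only [Fin.val_mk, if_true, eq_self_iff_true]
        rw [if_pos (by omega)]
      · have hj' : (j : ℕ) ≠ (i:ℕ)-1 := fun hc => hj (Fin.ext hc)
        rw [if_neg hj, if_neg (by omega), if_neg (by omega), if_neg (by omega), zero_mul]

lemma mem_spectrum_M (n : ℕ) (hn : 2 ≤ n) (l : ℂ) (hl : l ^ (2*n-1) = 4) :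
    l ∈ spectrum ℂ (M n) := by
  classical
  set w : Fin (2*n) → ℂ := fun i =>
    if (i : ℕ) = 0 then 2 else (if n ≤ (i : ℕ) then 2 else 1) * l ^ (2*n-1-(i:ℕ)) with hw
  have hwz : ∀ j : Fin (2*n), (j : ℕ) = 0 → w j = 2 := fun j hj => by
    rw [hw]; exact if_pos hj
  have hwv : ∀ j : Fin (2*n), (j : ℕ) ≠ 0 →
      w j = (if n ≤ (j : ℕ) then 2 else 1) * l ^ (2*n-1-(j:ℕ)) := fun j hj => by
    rw [hw]; exact if_neg hj
  have hMw : (M n).mulVec w = l • w := by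
    funext i
    rw [mulVec_M n hn]
    show _ = l * w i
    have hi := i.2
    by_cases hi0 : (i : ℕ) = 0
    · rw [if_pos hi0, hwz i hi0, hwv ⟨2*n-2, by omega⟩ (by simp only [Fin.val_mk]; omega)]
      simp only [Fin.val_mk]
      rw [if_pos (by omega)]
      have : 2*n-1-(2*n-2) = 1 := by omega
      rw [this, pow_one]; ring
    · by_cases hi1 : (i : ℕ) = 1
      · rw [if_neg hi0, if_pos hi1, hwz ⟨0, by omega⟩ rfl, hwv i hi0,
          hwv ⟨2*n-1, by omega⟩ (by simp only [Fin.val_mk]; omega)]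
        simp only [Fin.val_mk, hi1]
        rw [if_pos (by omega), if_neg (by omega)]
        have e1 : 2*n-1-(2*n-1) = 0 := by omega
        rw [e1, pow_zero]
        have : l * (1 * l ^ (2*n-1-1)) = l ^ (2*n-1) := by
          rw [one_mul, ← pow_succ']; congr 1; omega
        rw [this, hl]; norm_num
      · rw [if_neg hi0, if_neg hi1, hwv i hi0,
          hwv ⟨(i:ℕ)-1, by omega⟩ (by simp only [Fin.val_mk]; omega)]
        simp only [Fin.val_mk]
        have hpow : l ^ (2*n-1-((i:ℕ)-1)) = l * l ^ (2*n-1-(i:ℕ)) := by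
          rw [← pow_succ']; congr 1; omega
        by_cases hin : (i : ℕ) = n
        · rw [if_pos hin, if_neg (by omega), if_pos (by omega), hpow]; ring
        · rw [if_neg hin]
          by_cases hge : n ≤ (i : ℕ)
          · rw [if_pos (by omega), if_pos hge, hpow]; ring
          · rw [if_neg (by omega), if_neg hge, hpow]; ring
  have hw0 : w ≠ 0 := by
    intro h
    have h2 : w ⟨0, by omega⟩ = 0 := by rw [h]; rfl
    rw [hwz ⟨0, by omega⟩ rfl] at h2
    norm_num at h2
  rw [spectrum.mem_iff]
  intro hU
  rw [Matrix.isUnit_iff_isUnit_det] at hU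
  have hdet : (algebraMap ℂ (Matrix (Fin (2*n)) (Fin (2*n)) ℂ) l - M n).det = 0 := by
    rw [← Matrix.exists_mulVec_eq_zero_iff]
    refine ⟨w, hw0, ?_⟩
    rw [Matrix.sub_mulVec, hMw, Algebra.algebraMap_eq_smul_one, Matrix.smul_mulVec,
      Matrix.one_mulVec, sub_self]
  rw [hdet] at hU
  exact (not_isUnit_zero hU)

lemma spectrum_M_classify (n : ℕ) (hn : 2 ≤ n) (μ : ℂ) (hμ : μ ∈ spectrum ℂ (M n)) :
    μ = 0 ∨ μ ^ (2*n-1) = 4 := by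
  classical
  by_cases hμ0 : μ = 0
  · exact Or.inl hμ0
  right
  rw [spectrum.mem_iff] at hμ
  have hdet : (algebraMap ℂ (Matrix (Fin (2*n)) (Fin (2*n)) ℂ) μ - M n).det = 0 := by
    by_contra h
    exact hμ ((Matrix.isUnit_iff_isUnit_det _).mpr (isUnit_iff_ne_zero.mpr h))
  obtain ⟨v, hv0, hv⟩ := (Matrix.exists_mulVec_eq_zero_iff).mpr hdet
  have hMv : (M n).mulVec v = μ • v := by
    have := hv
    rw [Matrix.sub_mulVec, Algebra.algebraMap_eq_smul_one, Matrix.smul_mulVec,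
      Matrix.one_mulVec, sub_eq_zero] at this
    exact this.symm
  have row : ∀ i : Fin (2*n),
      (if (i : ℕ) = 0 then v ⟨2*n-2, by omega⟩
      else if (i : ℕ) = 1 then v ⟨0, by omega⟩ + v ⟨2*n-1, by omega⟩
      else (if (i : ℕ) = n then 2 else 1) * v ⟨(i : ℕ)-1, by omega⟩) = μ * v i := by
    intro i
    rw [← mulVec_M n hn, hMv]; rfl
  -- the key recursion claim
  have claim : ∀ k : ℕ, (hk1 : 1 ≤ k) → (hk2 : k ≤ 2*n-1) →
      μ ^ (k-1) * v ⟨k, by omega⟩ = (if n ≤ k then 2 else 1) * v ⟨1, by omega⟩ := by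
    intro k
    induction k with
    | zero => omega
    | succ m ih =>
      intro hk1 hk2
      rcases Nat.eq_or_lt_of_le hk1 with h1 | h1
      · -- m+1 = 1
        have hm : m = 0 := by omega
        subst hm
        rw [if_neg (by omega)]
        norm_num
      · -- m ≥ 1
        have hm1 : 1 ≤ m := by omega
        have hrec := row ⟨m+1, by omega⟩
        simp only [Fin.val_mk] at hrec
        rw [if_neg (by omega), if_neg (by omega)] at hrec
        have hrec' : (if m + 1 = n then 2 else 1) * v ⟨m, by omega⟩
            = μ * v ⟨m+1, by omega⟩ := hrec
        have ihm := ih hm1 (by omega)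
        -- hrec : (if m+1 = n then 2 else 1) * v ⟨m⟩ = μ * v ⟨m+1⟩
        have key : μ ^ m * v ⟨m+1, by omega⟩
            = μ ^ (m-1) * ((if m+1 = n then 2 else 1) * v ⟨m, by omega⟩) := by
          rw [hrec']
          have : μ ^ m = μ ^ (m-1) * μ := by rw [← pow_succ]; congr 1; omega
          rw [this]; ring
        rw [show m + 1 - 1 = m from rfl, key, mul_comm (μ ^ (m-1)) _, mul_assoc,
          mul_comm _ (μ ^ (m-1)), ihm]
        by_cases hmn : m + 1 = n
        · rw [if_pos hmn, if_neg (by omega), if_pos (by omega)]; ring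
        · rw [if_neg hmn]
          by_cases hge : n ≤ m
          · rw [if_pos hge, if_pos (by omega)]; ring
          · rw [if_neg hge, if_neg (by omega)]; ring
  -- extract key equations
  have h0 := row ⟨0, by omega⟩
  simp only [Fin.val_mk] at h0
  rw [if_pos trivial] at h0
  -- h0 : v ⟨2n-2⟩ = μ * v ⟨0⟩
  have h1 := row ⟨1, by omega⟩
  simp only [Fin.val_mk] at h1
  rw [if_neg (by omega), if_pos trivial] at h1
  -- h1 : v 0 + v (2n-1) = μ * v 1
  have c1 := claim (2*n-2) (by omega) (by omega)
  rw [if_pos (by omega)] at c1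
  have c2 := claim (2*n-1) (by omega) (by omega)
  rw [if_pos (by omega)] at c2
  -- derive μ^(2n-2) * v 0 = 2 * v 1
  have hv0eq : μ ^ (2*n-2) * v ⟨0, by omega⟩ = 2 * v ⟨1, by omega⟩ := by
    have : μ ^ (2*n-2) = μ ^ (2*n-3) * μ := by rw [← pow_succ]; congr 1; omega
    rw [this, mul_assoc, ← h0]
    have e : 2*n-2-1 = 2*n-3 := by omega
    rw [e] at c1
    exact c1
  -- multiply h1 by μ^(2n-2)
  have hmain : (μ ^ (2*n-1) - 4) * v ⟨1, by omega⟩ = 0 := by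
    have := congrArg (fun z => μ ^ (2*n-2) * z) h1
    simp only [mul_add] at this
    rw [hv0eq] at this
    have e : 2*n-1-1 = 2*n-2 := by omega
    rw [e] at c2
    rw [c2] at this
    have e2 : μ ^ (2*n-2) * (μ * v ⟨1, by omega⟩) = μ ^ (2*n-1) * v ⟨1, by omega⟩ := by
      rw [show μ ^ (2*n-2) * (μ * v ⟨1, by omega⟩) = (μ ^ (2*n-2) * μ) * v ⟨1, by omega⟩ by ring,
        ← pow_succ]
      congr 2
      omega
    rw [e2] at this
    rw [sub_mul]
    rw [← this]
    ring
  rcases mul_eq_zero.mp hmain with h | h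
  · linear_combination h
  · -- v 1 = 0 leads to v = 0, contradiction
    exfalso
    apply hv0
    funext i
    have hi := i.2
    by_cases hi0 : (i : ℕ) = 0
    · have : μ ^ (2*n-2) * v i = 0 := by
        have : i = ⟨0, by omega⟩ := Fin.ext hi0
        rw [this, hv0eq, h, mul_zero]
      have hpne : μ ^ (2*n-2) ≠ 0 := pow_ne_zero _ hμ0
      exact (mul_eq_zero.mp this).resolve_left hpne
    · have ci := claim (i:ℕ) (by omega) (by omega)
      have : (⟨(i:ℕ), by omega⟩ : Fin (2*n)) = i := Fin.ext rfl
      rw [this, h, mul_zero] at ci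
      have hpne : μ ^ ((i:ℕ)-1) ≠ 0 := pow_ne_zero _ hμ0
      exact (mul_eq_zero.mp ci).resolve_left hpne

theorem fpdim_high (n p : ℕ) (hn : 1 ≤ n) (hp1 : n ≤ p) (hp2 : p ≤ 2*n - 2) :
    IsGreatest {r : ℝ | ∃ z ∈ spectrum ℂ ((2⁻¹ : ℂ) • (M n) ^ p), r = ‖z‖}
      ((2:ℝ) ^ ((2*p : ℝ) / (2*n - 1) - 1)) := by
  classical
  have hn2 : 2 ≤ n := by omega
  have hp0 : 0 < p := by omega
  have hdR : (0:ℝ) < 2*(n:ℝ) - 1 := by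
    have : (2:ℝ) ≤ (n:ℝ) := by exact_mod_cast hn2
    linarith
  have hdcast : ((2*n - 1 : ℕ) : ℝ) = 2*(n:ℝ) - 1 := by
    rw [Nat.cast_sub (by omega)]; push_cast; ring
  set lr : ℝ := (2:ℝ) ^ ((2:ℝ)/(2*(n:ℝ)-1)) with hlr
  have hlrpos : 0 < lr := Real.rpow_pos_of_pos (by norm_num) _
  have hlrpow : lr ^ (2*n-1 : ℕ) = 4 := by
    rw [hlr, ← Real.rpow_natCast ((2:ℝ) ^ ((2:ℝ)/(2*(n:ℝ)-1))) (2*n-1),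
      ← Real.rpow_mul (by norm_num), hdcast, div_mul_cancel₀ _ (ne_of_gt hdR)]
    rw [show (2:ℝ) = ((2:ℕ):ℝ) by norm_num, Real.rpow_natCast]
    norm_num
  have hl4 : ((lr : ℂ)) ^ (2*n-1) = 4 := by
    rw [← Complex.ofReal_pow, hlrpow]; norm_num
  have hlmem : (lr : ℂ) ∈ spectrum ℂ (M n) := mem_spectrum_M n hn2 _ hl4
  -- spectral mapping
  set q : ℂ[X] := C (2⁻¹ : ℂ) * X ^ p with hq
  have haeval : aeval (M n) q = (2⁻¹ : ℂ) • (M n) ^ p := by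
    rw [hq, _root_.map_mul, aeval_C, _root_.map_pow, aeval_X, ← Algebra.smul_def]
  have hdeg : 0 < q.degree := by
    rw [hq, degree_C_mul_X_pow p (by norm_num)]
    exact_mod_cast hp0
  have hspec : spectrum ℂ ((2⁻¹ : ℂ) • (M n) ^ p)
      = (fun k => eval k q) '' spectrum ℂ (M n) := by
    rw [← haeval]
    exact spectrum.map_polynomial_aeval_of_degree_pos (M n) q hdeg
  have heval : ∀ k : ℂ, eval k q = 2⁻¹ * k ^ p := by
    intro k; rw [hq]; simp
  -- the target value
  have htarget : 2⁻¹ * lr ^ p = (2:ℝ) ^ ((2*p : ℝ) / (2*(n:ℝ) - 1) - 1) := by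
    rw [Real.rpow_sub (by norm_num), Real.rpow_one]
    rw [hlr, ← Real.rpow_natCast ((2:ℝ) ^ ((2:ℝ)/(2*(n:ℝ)-1))) p,
      ← Real.rpow_mul (by norm_num)]
    rw [show (2:ℝ)/(2*(n:ℝ)-1) * (p:ℝ) = (2*p : ℝ)/(2*(n:ℝ)-1) by ring]
    ring
  have habs : ∀ μ : ℂ, μ ∈ spectrum ℂ (M n) → ‖eval μ q‖ = 0 ∨
      ‖eval μ q‖ = 2⁻¹ * lr ^ p := by
    intro μ hμ
    rcases spectrum_M_classify n hn2 μ hμ with rfl | h4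
    · left; rw [heval, zero_pow (by omega), mul_zero, norm_zero]
    · right
      have habsμ : ‖μ‖ = lr := by
        have h1 : (‖μ‖) ^ (2*n-1) = lr ^ (2*n-1) := by
          rw [← norm_pow, h4, hlrpow]; norm_num
        exact (pow_left_inj₀ (norm_nonneg μ) (le_of_lt hlrpos) (by omega)).mp h1
      rw [heval, norm_mul, norm_pow, habsμ]
      congr 1
      simp
  constructor
  · -- membership
    refine ⟨2⁻¹ * (lr : ℂ) ^ p, ?_, ?_⟩
    · rw [hspec]
      exact ⟨(lr : ℂ), hlmem, heval _⟩
    · symm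
      rw [norm_mul, norm_pow,
        show ‖(2⁻¹ : ℂ)‖ = 2⁻¹ by norm_num,
        Complex.norm_real, Real.norm_eq_abs, abs_of_pos hlrpos]
      exact htarget
  · -- upper bound
    rintro r ⟨z, hz, rfl⟩
    rw [hspec] at hz
    obtain ⟨μ, hμ, rfl⟩ := hz
    rcases habs μ hμ with h | h
    · rw [h]; positivity
    · rw [h, htarget]
end
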